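/- For integers ℓ, m with m ≥ 0 and 2m - ℓ < -1, and a complex number z with nonzero imaginary part, the integral ∫_{-∞}^{∞} (x+z)^{m-ℓ} (x+z̄)^{m} dx equals 0. -/

import Mathlib

/-!
Write `x + z̄ = (x + z) + (z̄ - z)` and expand `(x + z̄)^m` binomially: the integrand becomes a
linear combination of `(x + z)^n` with `m - ℓ ≤ n ≤ 2m - ℓ ≤ -2`. Each of these is integrable,
being `O(1 / ((x + Re z)^2 + (Im z)^2))` because `|Im z| ≤ ‖x + z‖`, and has the antiderivative
`(x + z)^(n+1) / (n+1)`, which vanishes at `±∞`; so each integral is zero.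
-/

open MeasureTheory Filter Topology Bornology Complex

lemma tendsto_zpow_cobounded_zero {𝕜 : Type*} [NormedDivisionRing 𝕜] {n : ℤ} (hn : n < 0) :
    Tendsto (fun w : 𝕜 ↦ w ^ n) (cobounded 𝕜) (𝓝 0) := by
  rw [tendsto_zero_iff_norm_tendsto_zero]
  simpa only [Function.comp_def, norm_zpow] using
    (tendsto_zpow_atTop_zero hn).comp tendsto_norm_cobounded_atTop

lemma tendsto_ofReal_add_cobounded (z : ℂ) :
    Tendsto (fun x : ℝ ↦ (x : ℂ) + z) (cobounded ℝ) (cobounded ℂ) :=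
  (tendsto_add_const_cobounded z).comp (RCLike.tendsto_ofReal_cobounded_cobounded ℂ)

lemma ofReal_add_ne_zero {z : ℂ} (hz : z.im ≠ 0) (x : ℝ) : (x : ℂ) + z ≠ 0 :=
  fun h ↦ hz (by simpa using congrArg im h)

lemma integrable_inv_sq_add_sq {b : ℝ} (hb : b ≠ 0) :
    Integrable fun x : ℝ ↦ (x ^ 2 + b ^ 2)⁻¹ := by
  refine (integrable_inv_one_add_sq.comp_div hb |>.const_mul (b ^ 2)⁻¹).congr
    (.of_forall fun x ↦ ?_)
  field_simp
  ring

lemma norm_ofReal_add_sq (x : ℝ) (z : ℂ) : ‖(x : ℂ) + z‖ ^ 2 = (x + z.re) ^ 2 + z.im ^ 2 := by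
  rw [Complex.sq_norm, normSq_apply]
  simp only [add_re, ofReal_re, add_im, ofReal_im, zero_add]
  ring

lemma integrable_ofReal_add_zpow {n : ℤ} (hn : n ≤ -2) {z : ℂ} (hz : z.im ≠ 0) :
    Integrable fun x : ℝ ↦ ((x : ℂ) + z) ^ n := by
  have hcont : Continuous fun x : ℝ ↦ ((x : ℂ) + z) ^ n :=
    (continuous_ofReal.add continuous_const).zpow₀ n fun x ↦ .inl (ofReal_add_ne_zero hz x)
  refine ((integrable_inv_sq_add_sq hz).comp_add_right z.re |>.const_mul (|z.im| ^ (n + 2))).mono'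
    hcont.aestronglyMeasurable (.of_forall fun x ↦ ?_)
  have hpos : 0 < ‖(x : ℂ) + z‖ := norm_pos_iff.2 (ofReal_add_ne_zero hz x)
  have him : |z.im| ≤ ‖(x : ℂ) + z‖ := by simpa using abs_im_le_norm ((x : ℂ) + z)
  have hanti : ‖(x : ℂ) + z‖ ^ (n + 2) ≤ |z.im| ^ (n + 2) := by
    simpa only [inv_zpow', neg_neg] using zpow_le_zpow_left₀ (n := -(n + 2)) (by omega)
      (by positivity) (inv_anti₀ (abs_pos.2 hz) him)
  calc ‖((x : ℂ) + z) ^ n‖ = ‖(x : ℂ) + z‖ ^ (n + 2) * (‖(x : ℂ) + z‖ ^ 2)⁻¹ := by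
        rw [norm_zpow, ← zpow_natCast, ← zpow_neg, ← zpow_add₀ hpos.ne']
        ring_nf
    _ ≤ |z.im| ^ (n + 2) * ((x + z.re) ^ 2 + z.im ^ 2)⁻¹ := by
        rw [norm_ofReal_add_sq]
        gcongr

lemma hasDerivAt_ofReal_add_zpow_succ_div {n : ℤ} (hn : n ≠ -1) {z : ℂ} (hz : z.im ≠ 0) (x : ℝ) :
    HasDerivAt (fun y : ℝ ↦ ((y : ℂ) + z) ^ (n + 1) / (n + 1)) (((x : ℂ) + z) ^ n) x := by
  have hn' : (n : ℂ) + 1 ≠ 0 := by exact_mod_cast (show n + 1 ≠ 0 by omega)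
  refine ((hasDerivAt_zpow (n + 1) _ (.inl (ofReal_add_ne_zero hz x))).comp (x : ℂ)
    ((hasDerivAt_id (x : ℂ)).add_const z)).comp_ofReal.div_const ((n : ℂ) + 1) |>.congr_deriv ?_
  rw [add_sub_cancel_right, Int.cast_add, Int.cast_one, mul_one]
  field_simp

lemma integral_ofReal_add_zpow_eq_zero {n : ℤ} (hn : n ≤ -2) {z : ℂ} (hz : z.im ≠ 0) :
    ∫ x : ℝ, ((x : ℂ) + z) ^ n = 0 := by
  have hvanish : Tendsto (fun y : ℝ ↦ ((y : ℂ) + z) ^ (n + 1) / (n + 1)) (cobounded ℝ) (𝓝 0) := by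
    simpa using ((tendsto_zpow_cobounded_zero (by omega)).comp
      (tendsto_ofReal_add_cobounded z)).div_const ((n : ℂ) + 1)
  simpa using integral_of_hasDerivAt_of_tendsto
    (hasDerivAt_ofReal_add_zpow_succ_div (by omega) hz) (integrable_ofReal_add_zpow hn hz)
    (hvanish.mono_left IsOrderBornology.atBot_le_cobounded)
    (hvanish.mono_left IsOrderBornology.atTop_le_cobounded)

lemma zpow_mul_add_pow_eq_sum {K : Type*} [Field K] {w : K} (hw : w ≠ 0) (c : K) (k : ℤ) (m : ℕ) :
    w ^ k * (w + c) ^ m =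
      ∑ j ∈ Finset.range (m + 1), c ^ (m - j) * m.choose j * w ^ (k + j) := by
  rw [add_pow, Finset.mul_sum]
  refine Finset.sum_congr rfl fun j _ ↦ ?_
  rw [zpow_add₀ hw, zpow_natCast]
  ring

/-- For integers `ℓ, m` with `m ≥ 0` and `2m - ℓ < -1`, and a complex number `z` with
nonzero imaginary part, `∫_{-∞}^{∞} (x+z)^{m-ℓ} (x+z̄)^{m} dx = 0`. -/
theorem integral_vanishes (ℓ m : ℤ) (hm : 0 ≤ m) (hconv : 2 * m - ℓ < -1)
    (z : ℂ) (hz : z.im ≠ 0) :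
    (∫ x : ℝ, ((x : ℂ) + z) ^ (m - ℓ) * ((x : ℂ) + (starRingEnd ℂ) z) ^ m) = 0 := by
  lift m to ℕ using hm
  have hexp : ∀ j ∈ Finset.range (m + 1), (m : ℤ) - ℓ + j ≤ -2 := fun j hj ↦ by
    have := Finset.mem_range_succ_iff.1 hj
    omega
  have hexpand (x : ℝ) : ((x : ℂ) + z) ^ ((m : ℤ) - ℓ) * ((x : ℂ) + (starRingEnd ℂ) z) ^ (m : ℤ) =
      ∑ j ∈ Finset.range (m + 1),
        ((starRingEnd ℂ) z - z) ^ (m - j) * m.choose j * ((x : ℂ) + z) ^ ((m : ℤ) - ℓ + j) := by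
    rw [zpow_natCast, ← zpow_mul_add_pow_eq_sum (ofReal_add_ne_zero hz x)]
    ring
  simp_rw [hexpand]
  rw [integral_finsetSum _ fun j hj ↦ (integrable_ofReal_add_zpow (hexp j hj) hz).const_mul _]
  exact Finset.sum_eq_zero fun j hj ↦ by
    rw [integral_const_mul, integral_ofReal_add_zpow_eq_zero (hexp j hj) hz, mul_zero]
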